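/- Fix an invertible matrix S̄ ∈ ℂ^{n×n} and set Ā = I_{m+1} ⊗ S̄. There exists δ > 0 such that for every map S : Ξ → ℂ^{n×n} with measurable entries in L²(Ξ, ρ) satisfying (∫_Ξ ‖S(ξ) - S̄‖_F² dρ(ξ))^{1/2} ≤ δ, the stochastic Galerkin projection A = 𝒢(S) satisfies ‖Ā⁻¹ A - I_{(m+1)n}‖_F < 1. -/

import Mathlib

open MeasureTheory Matrix Kronecker

/-- The Frobenius norm of a complex matrix. -/
noncomputable def frob {I J : Type*} [Fintype I] [Fintype J] (M : Matrix I J ℂ) : ℝ :=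
  Real.sqrt (∑ i, ∑ j, ‖M i j‖ ^ 2)

set_option maxHeartbeats 1000000

section FrobHelpers
attribute [local instance] Matrix.frobeniusSeminormedAddCommGroup

lemma frob_eq_norm {I J : Type*} [Fintype I] [Fintype J] (M : Matrix I J ℂ) : frob M = ‖M‖ := by
  rw [Matrix.frobenius_norm_def, ← Real.sqrt_eq_rpow, frob]
  congr 1
  refine Finset.sum_congr rfl fun i _ => Finset.sum_congr rfl fun j _ => ?_
  rw [show (2:ℝ) = ((2:ℕ):ℝ) by norm_num, Real.rpow_natCast]

lemma frob_mul_le {I : Type*} [Fintype I] (M N : Matrix I I ℂ) :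
    frob (M * N) ≤ frob M * frob N := by
  simpa [frob_eq_norm] using Matrix.frobenius_norm_mul M N

end FrobHelpers

lemma frob_sq {I J : Type*} [Fintype I] [Fintype J] (M : Matrix I J ℂ) :
    frob M ^ 2 = ∑ i, ∑ j, ‖M i j‖ ^ 2 :=
  Real.sq_sqrt (by positivity)

lemma integrable_mul_of_memL2 {Ξ : Type*} [MeasurableSpace Ξ] {ρ : Measure Ξ} {f g : Ξ → ℂ}
    (hf : MemLp f 2 ρ) (hg : MemLp g 2 ρ) : Integrable (fun ξ => f ξ * g ξ) ρ := by
  have hfi : Integrable (fun ξ => ‖f ξ‖^2) ρ := (memLp_two_iff_integrable_sq_norm hf.1).mp hf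
  have hgi : Integrable (fun ξ => ‖g ξ‖^2) ρ := (memLp_two_iff_integrable_sq_norm hg.1).mp hg
  refine ((hfi.add hgi).const_mul (1/2)).mono' (hf.1.mul hg.1) (ae_of_all _ fun ξ => ?_)
  have h1 := norm_nonneg (f ξ); have h2 := norm_nonneg (g ξ)
  rw [norm_mul]; simp only [Pi.add_apply]
  nlinarith [sq_nonneg (‖f ξ‖ - ‖g ξ‖)]

/-- **`‖Ā⁻¹A - I‖_F < 1` for sufficiently small perturbation.**
Fix an invertible `S̄ ∈ ℂ^{n×n}` and set `Ā = I_{m+1} ⊗ S̄`.  There exists `δ > 0`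
such that for every `S : Ξ → ℂ^{n×n}` with measurable entries in `L²(Ξ, ρ)`
satisfying `(∫ ‖S(ξ) - S̄‖_F² dρ)^{1/2} ≤ δ`, the stochastic Galerkin projection
`A = 𝒢(S)` satisfies `‖Ā⁻¹ A - I‖_F < 1`. -/
theorem mean_value_preconditioner_small_perturbation
    {Ξ : Type*} [MeasurableSpace Ξ] (ρ : Measure Ξ) [IsProbabilityMeasure ρ]
    {m n : ℕ} (φ : Fin (m + 1) → Ξ → ℝ)
    (hφmeas : ∀ i, Measurable (φ i))
    (hφL2 : ∀ i j, Integrable (fun ξ => (φ i ξ * φ j ξ) ^ 2) ρ)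
    (hortho : ∀ i j, ∫ ξ, φ i ξ * φ j ξ ∂ρ = if i = j then 1 else 0)
    (Sbar : Matrix (Fin n) (Fin n) ℂ) (hinv : IsUnit Sbar) :
    ∃ δ : ℝ, 0 < δ ∧
      ∀ S : Ξ → Matrix (Fin n) (Fin n) ℂ,
        (∀ μ ν, Measurable (fun ξ => S ξ μ ν)) →
        (∀ μ ν, Integrable (fun ξ => ‖S ξ μ ν‖ ^ 2) ρ) →
        Real.sqrt (∫ ξ, frob (S ξ - Sbar) ^ 2 ∂ρ) ≤ δ →
        frob (((1 : Matrix (Fin (m + 1)) (Fin (m + 1)) ℂ) ⊗ₖ Sbar)⁻¹ *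
            (Matrix.of fun p q =>
              ∫ ξ, S ξ p.2 q.2 * ((φ p.1 ξ * φ q.1 ξ : ℝ) : ℂ) ∂ρ) - 1) < 1 := by
  classical
  set C : Fin (m+1) → Fin (m+1) → ℝ := fun i j => ∫ ξ, (φ i ξ * φ j ξ)^2 ∂ρ with hCdef
  have hC0 : ∀ i j, 0 ≤ C i j := fun i j => integral_nonneg fun ξ => sq_nonneg _
  set L : ℝ := ∑ p : Fin (m+1) × Fin n, ∑ q : Fin (m+1) × Fin n, ((1 + C p.1 q.1)/2)^2 with hL
  have hL0 : 0 ≤ L :=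
    Finset.sum_nonneg fun _ _ => Finset.sum_nonneg fun _ _ => sq_nonneg _
  set Abar := ((1 : Matrix (Fin (m+1)) (Fin (m+1)) ℂ) ⊗ₖ Sbar) with hAbar
  set N := frob Abar⁻¹ with hN
  clear_value N
  have hN0 : 0 ≤ N := by rw [hN]; exact Real.sqrt_nonneg _
  have hsL0 : 0 ≤ Real.sqrt L := Real.sqrt_nonneg _
  have hden : 0 < 2*(N+1)*(Real.sqrt L + 1) :=
    mul_pos (mul_pos two_pos (by linarith)) (by linarith)
  have hδpos : 0 < 1/(2*(N+1)*(Real.sqrt L + 1)) := by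
    exact div_pos one_pos hden
  refine ⟨1/(2*(N+1)*(Real.sqrt L + 1)), hδpos, ?_⟩
  set δ := 1/(2*(N+1)*(Real.sqrt L + 1)) with hδ
  clear_value δ
  have hδ0 : 0 < δ := hδpos
  intro S hSmeas hSL2 hSδ
  -- basic membership facts
  set g : Fin (m+1) → Fin (m+1) → Ξ → ℂ := fun i j ξ => ((φ i ξ * φ j ξ : ℝ) : ℂ) with hg
  have hgnorm : ∀ i j ξ, ‖g i j ξ‖^2 = (φ i ξ * φ j ξ)^2 := by
    intro i j ξ; rw [hg]; simp only []
    rw [Complex.norm_real, Real.norm_eq_abs, sq_abs]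
  have hgmem : ∀ i j, MemLp (g i j) 2 ρ := by
    intro i j
    refine (memLp_two_iff_integrable_sq_norm
      (Complex.measurable_ofReal.comp ((hφmeas i).mul (hφmeas j))).aestronglyMeasurable).mpr ?_
    refine (hφL2 i j).congr (ae_of_all _ fun ξ => ?_)
    simp [Function.comp_apply, Complex.norm_real, Real.norm_eq_abs, ← abs_mul, sq_abs]
  have hgint2 : ∀ i j, Integrable (fun ξ => ‖g i j ξ‖^2) ρ :=
    fun i j => (memLp_two_iff_integrable_sq_norm (hgmem i j).1).mp (hgmem i j)
  have hgC : ∀ i j, ∫ ξ, ‖g i j ξ‖^2 ∂ρ = C i j := by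
    intro i j; rw [hCdef]; exact congrArg _ (funext fun ξ => hgnorm i j ξ)
  have hSmem : ∀ μ ν, MemLp (fun ξ => S ξ μ ν) 2 ρ := by
    intro μ ν
    refine (memLp_two_iff_integrable_sq_norm (hSmeas μ ν).aestronglyMeasurable).mpr ?_
    have : (fun ξ => ‖S ξ μ ν‖^2) = fun ξ => ‖S ξ μ ν‖^2 := by
      funext ξ; rfl
    rw [this]; exact hSL2 μ ν
  have hfmem : ∀ μ ν, MemLp (fun ξ => S ξ μ ν - Sbar μ ν) 2 ρ :=
    fun μ ν => (hSmem μ ν).sub (memLp_const _)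
  have hfint2 : ∀ μ ν, Integrable (fun ξ => ‖S ξ μ ν - Sbar μ ν‖^2) ρ :=
    fun μ ν => (memLp_two_iff_integrable_sq_norm (hfmem μ ν).1).mp (hfmem μ ν)
  have hfg : ∀ μ ν i j, Integrable (fun ξ => (S ξ μ ν - Sbar μ ν) * g i j ξ) ρ :=
    fun μ ν i j => integrable_mul_of_memL2 (hfmem μ ν) (hgmem i j)
  have hSg : ∀ μ ν i j, Integrable (fun ξ => S ξ μ ν * g i j ξ) ρ :=
    fun μ ν i j => integrable_mul_of_memL2 (hSmem μ ν) (hgmem i j)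
  have hcg : ∀ (c : ℂ) i j, Integrable (fun ξ => c * g i j ξ) ρ :=
    fun c i j => ((hgmem i j).integrable one_le_two).const_mul c
  -- integral of frob squared
  have hfrobint : Integrable (fun ξ => frob (S ξ - Sbar)^2) ρ := by
    have heq : (fun ξ => frob (S ξ - Sbar)^2)
        = fun ξ => ∑ μ, ∑ ν, ‖(S ξ - Sbar) μ ν‖^2 := funext fun ξ => frob_sq _
    rw [heq]
    refine integrable_finset_sum _ fun μ _ => integrable_finset_sum _ fun ν _ => ?_
    have : (fun ξ => ‖(S ξ - Sbar) μ ν‖^2)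
        = fun ξ => ‖S ξ μ ν - Sbar μ ν‖^2 := by
      funext ξ; rw [Matrix.sub_apply]
    rw [this]; exact hfint2 μ ν
  have hint_frob_le : ∫ ξ, frob (S ξ - Sbar)^2 ∂ρ ≤ δ^2 := by
    have h0 : 0 ≤ ∫ ξ, frob (S ξ - Sbar)^2 ∂ρ := integral_nonneg fun ξ => sq_nonneg _
    calc ∫ ξ, frob (S ξ - Sbar)^2 ∂ρ = Real.sqrt (∫ ξ, frob (S ξ - Sbar)^2 ∂ρ)^2 :=
          (Real.sq_sqrt h0).symm
      _ ≤ δ^2 := pow_le_pow_left₀ (Real.sqrt_nonneg _) hSδ 2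
  have hentry2 : ∀ μ ν, ∫ ξ, ‖S ξ μ ν - Sbar μ ν‖^2 ∂ρ ≤ δ^2 := by
    intro μ ν
    refine le_trans (integral_mono (hfint2 μ ν) hfrobint fun ξ => ?_) hint_frob_le
    rw [frob_sq]
    calc ‖S ξ μ ν - Sbar μ ν‖^2 = ‖(S ξ - Sbar) μ ν‖^2 := by
          rw [Matrix.sub_apply]
      _ ≤ ∑ ν', ‖(S ξ - Sbar) μ ν'‖^2 :=
          Finset.single_le_sum (f := fun ν' => ‖(S ξ - Sbar) μ ν'‖^2)
            (fun _ _ => sq_nonneg _) (Finset.mem_univ ν)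
      _ ≤ ∑ μ', ∑ ν', ‖(S ξ - Sbar) μ' ν'‖^2 :=
          Finset.single_le_sum (f := fun μ' => ∑ ν', ‖(S ξ - Sbar) μ' ν'‖^2)
            (fun _ _ => Finset.sum_nonneg fun _ _ => sq_nonneg _) (Finset.mem_univ μ)
  -- entrywise bound on the perturbation
  have hE : ∀ (μ ν : Fin n) (i j : Fin (m+1)),
      ‖∫ ξ, (S ξ μ ν - Sbar μ ν) * g i j ξ ∂ρ‖ ≤ δ * ((1 + C i j)/2) := by
    intro μ ν i j
    have h1 : ‖∫ ξ, (S ξ μ ν - Sbar μ ν) * g i j ξ ∂ρ‖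
        ≤ ∫ ξ, ‖(S ξ μ ν - Sbar μ ν) * g i j ξ‖ ∂ρ := by
      exact norm_integral_le_integral_norm _
    have h2 : ∫ ξ, ‖(S ξ μ ν - Sbar μ ν) * g i j ξ‖ ∂ρ
        ≤ ∫ ξ, (1/2) * ((1/δ) * ‖S ξ μ ν - Sbar μ ν‖^2 + δ * ‖g i j ξ‖^2) ∂ρ := by
      refine integral_mono ((hfg μ ν i j).norm)
        ((((hfint2 μ ν).const_mul (1/δ)).add ((hgint2 i j).const_mul δ)).const_mul (1/2))
        fun ξ => ?_
      rw [norm_mul]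
      set a := ‖S ξ μ ν - Sbar μ ν‖ with ha
      set b := ‖g i j ξ‖ with hb
      have ha0 : 0 ≤ a := norm_nonneg _
      have hb0 : 0 ≤ b := norm_nonneg _
      have key : a * b * (2*δ) ≤ ((1/2) * ((1/δ)*a^2 + δ*b^2)) * (2*δ) := by
        field_simp
        nlinarith [sq_nonneg (a - δ*b)]
      exact le_of_mul_le_mul_right key (by linarith)
    have h3 : ∫ ξ, (1/2) * ((1/δ) * ‖S ξ μ ν - Sbar μ ν‖^2 + δ * ‖g i j ξ‖^2) ∂ρ
        = (1/2) * ((1/δ) * ∫ ξ, ‖S ξ μ ν - Sbar μ ν‖^2 ∂ρ + δ * ∫ ξ, ‖g i j ξ‖^2 ∂ρ) := by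
      rw [integral_const_mul, integral_add ((hfint2 μ ν).const_mul (1/δ))
        ((hgint2 i j).const_mul δ), integral_const_mul, integral_const_mul]
    have h4 : (1/2) * ((1/δ) * ∫ ξ, ‖S ξ μ ν - Sbar μ ν‖^2 ∂ρ + δ * ∫ ξ, ‖g i j ξ‖^2 ∂ρ)
        ≤ δ * ((1 + C i j)/2) := by
      rw [hgC i j]
      have h5 : (1/δ) * ∫ ξ, ‖S ξ μ ν - Sbar μ ν‖^2 ∂ρ ≤ (1/δ) * δ^2 :=
        mul_le_mul_of_nonneg_left (hentry2 μ ν) (le_of_lt (by rw [one_div]; exact inv_pos.mpr hδ0))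
      have h6 : (1/δ) * δ^2 = δ := by field_simp
      nlinarith [hC0 i j]
    calc ‖∫ ξ, (S ξ μ ν - Sbar μ ν) * g i j ξ ∂ρ‖
        ≤ ∫ ξ, ‖(S ξ μ ν - Sbar μ ν) * g i j ξ‖ ∂ρ := h1
      _ ≤ _ := h2
      _ = _ := h3
      _ ≤ _ := h4
  -- the Galerkin matrix decomposes as Abar + E
  set G : Matrix (Fin (m+1) × Fin n) (Fin (m+1) × Fin n) ℂ :=
    Matrix.of (fun p q => ∫ ξ, S ξ p.2 q.2 * ((φ p.1 ξ * φ q.1 ξ : ℝ) : ℂ) ∂ρ) with hG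
  set E : Matrix (Fin (m+1) × Fin n) (Fin (m+1) × Fin n) ℂ :=
    Matrix.of (fun p q => ∫ ξ, (S ξ p.2 q.2 - Sbar p.2 q.2) * g p.1 q.1 ξ ∂ρ) with hEdef
  have hGE : G - Abar = E := by
    ext p q
    have hsplit : (fun ξ => (S ξ p.2 q.2 - Sbar p.2 q.2) * g p.1 q.1 ξ)
        = fun ξ => S ξ p.2 q.2 * g p.1 q.1 ξ - Sbar p.2 q.2 * g p.1 q.1 ξ := by
      funext ξ; ring
    have hint : ∫ ξ, (S ξ p.2 q.2 - Sbar p.2 q.2) * g p.1 q.1 ξ ∂ρ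
        = (∫ ξ, S ξ p.2 q.2 * g p.1 q.1 ξ ∂ρ) - Sbar p.2 q.2 * ∫ ξ, g p.1 q.1 ξ ∂ρ := by
      rw [hsplit, integral_sub (hSg _ _ _ _) (hcg _ _ _), integral_const_mul]
    have hgint : ∫ ξ, g p.1 q.1 ξ ∂ρ = if p.1 = q.1 then (1:ℂ) else 0 := by
      have h1 : ∫ ξ, g p.1 q.1 ξ ∂ρ = ((∫ ξ, φ p.1 ξ * φ q.1 ξ ∂ρ : ℝ) : ℂ) := integral_ofReal
      rw [h1, hortho p.1 q.1]
      split <;> simp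
    simp only [Matrix.sub_apply, hEdef, hG, Matrix.of_apply, hAbar, Matrix.kroneckerMap_apply,
      Matrix.one_apply]
    rw [hint, hgint]
    split <;> ring
  have habsE : ∀ p q : Fin (m+1) × Fin n, ‖E p q‖ ≤ δ * ((1 + C p.1 q.1)/2) :=
    fun p q => hE p.2 q.2 p.1 q.1
  have hfrobE : frob E ≤ δ * Real.sqrt L := by
    have hsum : ∑ p : Fin (m+1) × Fin n, ∑ q : Fin (m+1) × Fin n, ‖E p q‖^2
        ≤ δ^2 * L := by
      rw [hL, Finset.mul_sum]
      refine Finset.sum_le_sum fun p _ => ?_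
      rw [Finset.mul_sum]
      refine Finset.sum_le_sum fun q _ => ?_
      calc ‖E p q‖^2 ≤ (δ * ((1 + C p.1 q.1)/2))^2 :=
            pow_le_pow_left₀ (norm_nonneg _) (habsE p q) 2
        _ = δ^2 * ((1 + C p.1 q.1)/2)^2 := by ring
    calc frob E = Real.sqrt (∑ p, ∑ q, ‖E p q‖^2) := rfl
      _ ≤ Real.sqrt (δ^2 * L) := Real.sqrt_le_sqrt hsum
      _ = δ * Real.sqrt L := by
          rw [Real.sqrt_mul (sq_nonneg δ), Real.sqrt_sq hδ0.le]
  have hdet : IsUnit Abar.det := by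
    rw [hAbar, Matrix.det_kronecker, Matrix.det_one, one_pow, one_mul]
    exact ((Matrix.isUnit_iff_isUnit_det Sbar).mp hinv).pow _
  have hABinv : Abar⁻¹ * Abar = 1 := Matrix.nonsing_inv_mul _ hdet
  have hmain : Abar⁻¹ * G - 1 = Abar⁻¹ * E := by
    rw [← hGE, Matrix.mul_sub, hABinv]
  calc frob (Abar⁻¹ * G - 1) = frob (Abar⁻¹ * E) := by rw [hmain]
    _ ≤ N * frob E := by rw [hN]; exact frob_mul_le _ _
    _ ≤ N * (δ * Real.sqrt L) := mul_le_mul_of_nonneg_left hfrobE hN0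
    _ < 1 := by
        rw [hδ]
        have heq : N * (1/(2*(N+1)*(Real.sqrt L + 1)) * Real.sqrt L)
            = N * Real.sqrt L / (2*(N+1)*(Real.sqrt L + 1)) := by ring
        rw [heq, div_lt_one hden]
        nlinarith
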